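/- arXiv:math/0312418 — 8 statements merged into one kernel-verified Lean document; each statement's English description precedes it below -/
import Mathlib

section
/- The number of s-non-squashing partitions of n equals the number of partitions of n into powers of s, for every integer n ≥ 0 and every integer s ≥ 2. -/
/-- A partition written as a nondecreasing list of positive parts. -/
def IsPartList (l : List ℕ) : Prop :=
  l.Pairwise (· ≤ ·) ∧ ∀ p ∈ l, 0 < p

/-- A partition with distinct parts, written as a strictly increasing list of positive parts. -/
def DistinctPartList (l : List ℕ) : Prop :=
  l.Pairwise (· < ·) ∧ ∀ p ∈ l, 0 < p

/-- The s-non-squashing condition: (s-1)(p₁+⋯+p_j) ≤ p_{j+1} for 1 ≤ j ≤ k-1. -/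
def NSq (s : ℕ) (l : List ℕ) : Prop :=
  ∀ j, 0 < j → j < l.length → (s - 1) * (l.take j).sum ≤ l.getD j 0

/-!
Write `a n`, `b n` for the numbers of `s`-non-squashing and of `s`-ary partitions of `n`,
and `d n` for the number of non-squashing partitions `l` with `s * l.sum ≤ n`. Removing the
largest part of a non-squashing partition of `n` leaves a non-squashing partition `l` with
`s * l.sum ≤ n`, and every such `l` arises exactly once, so `a = d`. Sorting by whether
`s * l.sum` is `≤ n` or `= n + 1`, and using `a = d`, gives
`d (n + 1) = d n + [s ∣ n + 1] d ((n + 1) / s)`. An `s`-ary partition of `n + 1` either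
contains a part `1`, which can be removed, or is `s` times an `s`-ary partition of
`(n + 1) / s`, so `b` satisfies the same recurrence as `d`, and `b 0 = d 0 = 1`.
-/

variable {s n x : ℕ} {l : List ℕ}

theorem eq_of_add_div_recurrence {M : Type*} [Add M] [Zero M] (hs : 1 < s) {f g : ℕ → M}
    (h0 : f 0 = g 0) (hf : ∀ n, f (n + 1) = f n + if s ∣ n + 1 then f ((n + 1) / s) else 0)
    (hg : ∀ n, g (n + 1) = g n + if s ∣ n + 1 then g ((n + 1) / s) else 0) : f = g := by
  funext n
  induction n using Nat.strong_induction_on with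
  | _ n ih =>
    cases n with
    | zero => exact h0
    | succ n => rw [hf, hg, ih n n.lt_succ_self, ih _ (Nat.div_lt_self n.succ_pos hs)]

theorem isPartList_nil : IsPartList [] :=
  ⟨.nil, by simp⟩

theorem IsPartList.eq_nil_of_sum_eq_zero (hl : IsPartList l) (h : l.sum = 0) : l = [] :=
  List.eq_nil_iff_forall_not_mem.mpr fun p hp =>
    (hl.2 p hp).ne' (List.sum_eq_zero_iff.mp h p hp)

theorem setOf_sum_eq_zero {P : List ℕ → Prop} (hP : ∀ l, P l → IsPartList l) (hnil : P []) :
    {l | P l ∧ l.sum = 0} = {[]} := by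
  ext l
  refine ⟨fun hl => (hP l hl.1).eq_nil_of_sum_eq_zero hl.2, ?_⟩
  rintro rfl
  exact ⟨hnil, rfl⟩

theorem isPartList_append_singleton :
    IsPartList (l ++ [x]) ↔ IsPartList l ∧ (∀ y ∈ l, y ≤ x) ∧ 0 < x := by
  simp only [IsPartList, List.pairwise_append, List.pairwise_singleton, List.mem_append,
    List.mem_singleton, forall_eq, true_and, or_imp, forall_and]
  tauto

theorem nsq_append_singleton :
    NSq s (l ++ [x]) ↔ NSq s l ∧ (l ≠ [] → (s - 1) * l.sum ≤ x) := by
  have take_eq : ∀ j ≤ l.length, (l ++ [x]).take j = l.take j :=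
    fun j hj => List.take_append_of_le_length hj
  have getD_eq : ∀ j < l.length, (l ++ [x]).getD j 0 = l.getD j 0 := List.getD_append _ _ _
  have getD_last : (l ++ [x]).getD l.length 0 = x := by simp
  simp only [NSq, List.length_append, List.length_singleton]
  constructor
  · intro h
    refine ⟨fun j hj hjl => ?_, fun hl => ?_⟩
    · have := h j hj (by omega)
      rwa [take_eq j hjl.le, getD_eq j hjl] at this
    · simpa [take_eq _ le_rfl, getD_last] using h l.length (List.length_pos_iff.mpr hl) (by omega)
  · rintro ⟨h, hlast⟩ j hj hjl
    rcases Nat.lt_succ_iff_lt_or_eq.mp hjl with hjl | rfl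
    · rw [take_eq j hjl.le, getD_eq j hjl]
      exact h j hj hjl
    · rw [take_eq _ le_rfl, List.take_length, getD_last]
      exact hlast (List.ne_nil_of_length_pos hj)

theorem encard_setOf_mul_sum_le_succ (P : List ℕ → Prop) (s n : ℕ) :
    {l | P l ∧ s * l.sum ≤ n + 1}.encard =
      {l | P l ∧ s * l.sum ≤ n}.encard + {l | P l ∧ s * l.sum = n + 1}.encard := by
  rw [← Set.encard_union_eq]
  · congr 1
    ext l
    simp only [Set.mem_ofPred_eq, Set.mem_union, Nat.le_add_one_iff, and_or_left]
  · exact Set.disjoint_left.mpr fun l h1 h2 => by simp only [Set.mem_ofPred_eq] at h1 h2; omega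

theorem encard_setOf_mul_sum_eq (P : List ℕ → Prop) (hs : 0 < s) (n : ℕ) :
    {l | P l ∧ s * l.sum = n}.encard =
      if s ∣ n then {l | P l ∧ l.sum = n / s}.encard else 0 := by
  split_ifs with h
  · obtain ⟨k, rfl⟩ := h
    simp only [Nat.mul_div_cancel_left k hs, Nat.mul_left_cancel_iff hs]
  · rw [Set.encard_eq_zero, Set.eq_empty_iff_forall_notMem]
    rintro l ⟨-, hl⟩
    exact h ⟨_, hl.symm⟩

def IsNonSquashingPartList (s : ℕ) (l : List ℕ) : Prop :=
  IsPartList l ∧ NSq s l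

theorem isNonSquashingPartList_nil : IsNonSquashingPartList s [] :=
  ⟨isPartList_nil, fun _ _ h => absurd h (Nat.not_lt_zero _)⟩

theorem isNonSquashingPartList_append_singleton (hs : 2 ≤ s) :
    IsNonSquashingPartList s (l ++ [x]) ↔
      IsNonSquashingPartList s l ∧ 0 < x ∧ (s - 1) * l.sum ≤ x := by
  simp only [IsNonSquashingPartList, isPartList_append_singleton, nsq_append_singleton]
  constructor
  · rintro ⟨⟨hl, -, hx⟩, hnsq, hlast⟩
    refine ⟨⟨hl, hnsq⟩, hx, ?_⟩
    rcases eq_or_ne l [] with rfl | hne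
    · simp
    · exact hlast hne
  · rintro ⟨⟨hl, hnsq⟩, hx, hlast⟩
    have hsum : l.sum ≤ (s - 1) * l.sum := Nat.le_mul_of_pos_left _ (by omega)
    exact ⟨⟨hl, fun y hy => (List.le_sum_of_mem hy).trans (hsum.trans hlast), hx⟩,
      hnsq, fun _ => hlast⟩

theorem setOf_isNonSquashingPartList_sum_eq (hs : 2 ≤ s) (hn : 0 < n) :
    {l | IsNonSquashingPartList s l ∧ l.sum = n} =
      (fun l => l ++ [n - l.sum]) '' {l | IsNonSquashingPartList s l ∧ s * l.sum ≤ n} := by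
  ext l
  constructor
  · rintro ⟨hl, rfl⟩
    rcases List.eq_nil_or_concat' l with rfl | ⟨L, x, rfl⟩
    · simp at hn
    obtain ⟨hL, -, hlast⟩ := (isNonSquashingPartList_append_singleton hs).mp hl
    have : L.sum ≤ s * L.sum := Nat.le_mul_of_pos_left _ (by omega)
    rw [Nat.sub_one_mul] at hlast
    exact ⟨L, ⟨hL, by simp only [List.sum_append, List.sum_singleton]; omega⟩, by simp⟩
  · rintro ⟨L, ⟨hL, hle⟩, rfl⟩
    have : 2 * L.sum ≤ s * L.sum := Nat.mul_le_mul_right _ hs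
    refine ⟨(isNonSquashingPartList_append_singleton hs).mpr ⟨hL, by omega, ?_⟩, ?_⟩
    · rw [Nat.sub_one_mul]
      omega
    · simp only [List.sum_append, List.sum_singleton]
      omega

theorem encard_isNonSquashingPartList_sum_eq (hs : 2 ≤ s) (n : ℕ) :
    {l | IsNonSquashingPartList s l ∧ l.sum = n}.encard =
      {l | IsNonSquashingPartList s l ∧ s * l.sum ≤ n}.encard := by
  rcases Nat.eq_zero_or_pos n with rfl | hn
  · congr 1
    ext l
    simp [mul_eq_zero, show s ≠ 0 by omega]
  · rw [setOf_isNonSquashingPartList_sum_eq hs hn]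
    exact Set.InjOn.encard_image fun _ _ _ _ h => (List.append_inj' h rfl).1

theorem encard_isNonSquashingPartList_mul_sum_le_succ (hs : 2 ≤ s) (n : ℕ) :
    {l | IsNonSquashingPartList s l ∧ s * l.sum ≤ n + 1}.encard =
      {l | IsNonSquashingPartList s l ∧ s * l.sum ≤ n}.encard +
        if s ∣ n + 1 then
          {l | IsNonSquashingPartList s l ∧ s * l.sum ≤ (n + 1) / s}.encard else 0 := by
  rw [encard_setOf_mul_sum_le_succ, encard_setOf_mul_sum_eq _ (by omega),
    encard_isNonSquashingPartList_sum_eq hs]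

def IsSAryPartList (s : ℕ) (l : List ℕ) : Prop :=
  IsPartList l ∧ ∀ p ∈ l, ∃ i, p = s ^ i

theorem isSAryPartList_nil : IsSAryPartList s [] :=
  ⟨isPartList_nil, by simp⟩

theorem isSAryPartList_cons_one : IsSAryPartList s (1 :: l) ↔ IsSAryPartList s l := by
  simp only [IsSAryPartList, IsPartList, List.pairwise_cons, List.forall_mem_cons]
  constructor
  · rintro ⟨⟨⟨-, hl⟩, -, hpos⟩, -, hpow⟩
    exact ⟨⟨hl, hpos⟩, hpow⟩
  · rintro ⟨⟨hl, hpos⟩, hpow⟩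
    exact ⟨⟨⟨hpos, hl⟩, one_pos, hpos⟩, ⟨0, (pow_zero s).symm⟩, hpow⟩

theorem isSAryPartList_map_mul (hs : 0 < s) :
    IsSAryPartList s (l.map (s * ·)) ↔ IsSAryPartList s l := by
  have pow_iff : ∀ p, (∃ i, s * p = s ^ i) ↔ ∃ i, p = s ^ i := fun p =>
    ⟨fun ⟨i, hi⟩ => match i, hi with
      | 0, hi => ⟨0, Nat.eq_one_of_mul_eq_one_left hi⟩
      | i + 1, hi => ⟨i, Nat.eq_of_mul_eq_mul_left hs (hi.trans (pow_succ' s i))⟩,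
     fun ⟨i, hi⟩ => ⟨i + 1, by rw [hi, pow_succ']⟩⟩
  simp only [IsSAryPartList, IsPartList, List.pairwise_map, List.forall_mem_map,
    Nat.mul_le_mul_left_iff hs, Nat.mul_pos_iff_of_pos_left hs, pow_iff]

theorem exists_eq_map_mul_of_forall_dvd (h : ∀ p ∈ l, s ∣ p) :
    ∃ t : List ℕ, l = t.map (s * ·) := by
  induction l with
  | nil => exact ⟨[], rfl⟩
  | cons a l ih =>
    obtain ⟨k, rfl⟩ := h a List.mem_cons_self
    obtain ⟨t, rfl⟩ := ih fun p hp => h p (List.mem_cons_of_mem _ hp)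
    exact ⟨k :: t, rfl⟩

theorem IsSAryPartList.eq_one_cons_or_forall_dvd (h : IsSAryPartList s l) :
    (∃ t, l = 1 :: t) ∨ ∀ p ∈ l, s ∣ p := by
  obtain ⟨⟨hsorted, hpos⟩, hpow⟩ := h
  cases l with
  | nil => simp
  | cons a t =>
    by_cases ha : a = 1
    · exact Or.inl ⟨t, ha ▸ rfl⟩
    refine Or.inr fun p hp => ?_
    obtain ⟨i, rfl⟩ := hpow p hp
    refine dvd_pow_self s fun hi => ha ?_
    have hap : a ≤ s ^ i := by
      rcases List.mem_cons.mp hp with heq | hmem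
      · exact heq.ge
      · exact List.rel_of_pairwise_cons hsorted hmem
    have := hpos a List.mem_cons_self
    simp only [hi, pow_zero] at hap
    omega

theorem setOf_isSAryPartList_sum_eq_succ (hs : 2 ≤ s) (n : ℕ) :
    {l | IsSAryPartList s l ∧ l.sum = n + 1} =
      List.cons 1 '' {l | IsSAryPartList s l ∧ l.sum = n} ∪
        List.map (s * ·) '' {l | IsSAryPartList s l ∧ s * l.sum = n + 1} := by
  have sum_map_mul (t : List ℕ) : (t.map (s * ·)).sum = s * t.sum := by
    simpa using List.sum_map_mul_left t id s
  ext l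
  constructor
  · rintro ⟨hl, hsum⟩
    rcases hl.eq_one_cons_or_forall_dvd with ⟨t, rfl⟩ | hdvd
    · refine Or.inl ⟨t, ⟨isSAryPartList_cons_one.mp hl, ?_⟩, rfl⟩
      simp only [List.sum_cons] at hsum
      omega
    · obtain ⟨t, rfl⟩ := exists_eq_map_mul_of_forall_dvd hdvd
      refine Or.inr ⟨t, ⟨(isSAryPartList_map_mul (by omega)).mp hl, ?_⟩, rfl⟩
      rwa [sum_map_mul] at hsum
  · rintro (⟨t, ⟨ht, hsum⟩, rfl⟩ | ⟨t, ⟨ht, hsum⟩, rfl⟩)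
    · exact ⟨isSAryPartList_cons_one.mpr ht, by rw [List.sum_cons, hsum, add_comm]⟩
    · exact ⟨(isSAryPartList_map_mul (by omega)).mpr ht, by rwa [sum_map_mul]⟩

theorem encard_isSAryPartList_sum_eq_succ (hs : 2 ≤ s) (n : ℕ) :
    {l | IsSAryPartList s l ∧ l.sum = n + 1}.encard =
      {l | IsSAryPartList s l ∧ l.sum = n}.encard +
        if s ∣ n + 1 then {l | IsSAryPartList s l ∧ l.sum = (n + 1) / s}.encard else 0 := by
  have map_injective : Function.Injective (List.map (s * ·)) :=
    List.map_injective_iff.mpr (mul_right_injective₀ (by omega : s ≠ 0))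
  have disjoint : Disjoint (List.cons 1 '' {l | IsSAryPartList s l ∧ l.sum = n})
      (List.map (s * ·) '' {l | IsSAryPartList s l ∧ s * l.sum = n + 1}) := by
    refine Set.disjoint_left.mpr ?_
    rintro _ ⟨t, -, rfl⟩ ⟨(_ | ⟨b, t'⟩), -, h⟩
    · simp at h
    · simp only [List.map_cons, List.cons.injEq] at h
      have := Nat.eq_one_of_mul_eq_one_right h.1
      omega
  rw [setOf_isSAryPartList_sum_eq_succ hs, Set.encard_union_eq disjoint,
    List.cons_injective.encard_image, map_injective.encard_image,
    encard_setOf_mul_sum_eq _ (by omega)]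

theorem stmt_0 (s n : ℕ) (hs : 2 ≤ s) :
    {l : List ℕ | IsPartList l ∧ NSq s l ∧ l.sum = n}.ncard =
    {l : List ℕ | IsPartList l ∧ (∀ p ∈ l, ∃ i, p = s ^ i) ∧ l.sum = n}.ncard := by
  have recurrence_solutions_eq :
      (fun n => {l | IsNonSquashingPartList s l ∧ s * l.sum ≤ n}.encard) =
        fun n => {l | IsSAryPartList s l ∧ l.sum = n}.encard := by
    refine eq_of_add_div_recurrence hs ?_ (encard_isNonSquashingPartList_mul_sum_le_succ hs)
      (encard_isSAryPartList_sum_eq_succ hs)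
    rw [← encard_isNonSquashingPartList_sum_eq hs,
      setOf_sum_eq_zero (fun _ h => h.1) isNonSquashingPartList_nil,
      setOf_sum_eq_zero (fun _ h => h.1) isSAryPartList_nil]
  rw [Set.ncard_def, Set.ncard_def]
  congr 1
  calc _ = {l | IsNonSquashingPartList s l ∧ l.sum = n}.encard := by
        simp only [IsNonSquashingPartList, and_assoc]
    _ = {l | IsNonSquashingPartList s l ∧ s * l.sum ≤ n}.encard :=
        encard_isNonSquashingPartList_sum_eq hs n
    _ = {l | IsSAryPartList s l ∧ l.sum = n}.encard := congrFun recurrence_solutions_eq n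
    _ = _ := by simp only [IsSAryPartList, and_assoc]
end

section
/- For every integer s ≥ 2, the number a_s(n) of s-non-squashing partitions of n satisfies a_s(n) = a_s(n-1) if n is not divisible by s, and a_s(n) = a_s(n-1) + a_s(n/s) if n is divisible by s, for all n ≥ s; moreover a_s(0) = a_s(1) = ... = a_s(s-1) = 1. -/
/-- Number of s-non-squashing partitions of n. -/
noncomputable def aNSq (s n : ℕ) : ℕ :=
  {l : List ℕ | IsPartList l ∧ NSq s l ∧ l.sum = n}.ncard

/-!
Removing the largest part `p` of an `s`-non-squashing partition of `n > 0` leaves an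
`s`-non-squashing partition of some `m` with `(s - 1) m ≤ p = n - m`, i.e. with `s m ≤ n`;
conversely any such partition of `m ≤ n / s` extends by the part `n - m`. Hence
`a_s(n) = ∑_{m ≤ n / s} a_s(m)` for `n > 0`, and going from `n - 1` to `n` adds the term
`a_s(n / s)` exactly when `s ∣ n`.
-/

def nonSquashingPartitions (s n : ℕ) : Set (List ℕ) :=
  {l : List ℕ | IsPartList l ∧ NSq s l ∧ l.sum = n}

theorem aNSq_eq_ncard (s n : ℕ) : aNSq s n = (nonSquashingPartitions s n).ncard := rfl

theorem isPartList_concat_iff {t : List ℕ} {p : ℕ} :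
    IsPartList (t ++ [p]) ↔ IsPartList t ∧ (∀ a ∈ t, a ≤ p) ∧ 0 < p := by
  simp only [IsPartList, List.pairwise_append, List.pairwise_singleton, List.mem_append,
    List.mem_singleton, forall_eq, or_imp, forall_and, true_and]
  tauto

theorem nSq_concat_iff {s p : ℕ} {t : List ℕ} :
    NSq s (t ++ [p]) ↔ NSq s t ∧ (s - 1) * t.sum ≤ p := by
  have htake : ∀ j ≤ t.length, ((t ++ [p]).take j).sum = (t.take j).sum := fun j hj => by
    simp [List.take_append, Nat.sub_eq_zero_of_le hj]
  have hget : ∀ j < t.length, (t ++ [p]).getD j 0 = t.getD j 0 := fun j hj =>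
    List.getD_append _ _ _ _ hj
  have hlast : (t ++ [p]).getD t.length 0 = p := by simp
  simp only [NSq, List.length_append, List.length_singleton]
  constructor
  · intro h
    refine ⟨fun j hj hjt => ?_, ?_⟩
    · simpa only [htake j hjt.le, hget j hjt] using h j hj (by omega)
    · rcases eq_or_ne t [] with rfl | hne
      · simp
      · simpa only [htake _ le_rfl, List.take_length, hlast]
          using h t.length (List.length_pos_iff.mpr hne) (by omega)
  · rintro ⟨ht, hp⟩ j hj hjt
    rcases (Nat.lt_succ_iff.mp hjt).lt_or_eq with hjt | rfl
    · simpa only [htake j hjt.le, hget j hjt] using ht j hj hjt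
    · simpa only [htake _ le_rfl, List.take_length, hlast] using hp

theorem concat_mem_nonSquashingPartitions_iff {s n p : ℕ} (hs : 2 ≤ s) {t : List ℕ} :
    t ++ [p] ∈ nonSquashingPartitions s n ↔
      t ∈ nonSquashingPartitions s t.sum ∧ (s - 1) * t.sum ≤ p ∧ 0 < p ∧ t.sum + p = n := by
  have hbound : (s - 1) * t.sum ≤ p → ∀ a ∈ t, a ≤ p := fun h a ha =>
    (List.le_sum_of_mem ha).trans ((Nat.le_mul_of_pos_left _ (by omega)).trans h)
  simp only [nonSquashingPartitions, Set.mem_ofPred_eq, isPartList_concat_iff, nSq_concat_iff,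
    List.sum_append, List.sum_singleton, and_true]
  constructor
  · rintro ⟨⟨ht, -, hp⟩, ⟨hnsq, hle⟩, hsum⟩
    exact ⟨⟨ht, hnsq⟩, hle, hp, hsum⟩
  · rintro ⟨⟨ht, hnsq⟩, hle, hp, hsum⟩
    exact ⟨⟨ht, hbound hle, hp⟩, ⟨hnsq, hle⟩, hsum⟩

theorem nonSquashingPartitions_zero (s : ℕ) : nonSquashingPartitions s 0 = {[]} := by
  ext l
  simp only [nonSquashingPartitions, Set.mem_ofPred_eq, Set.mem_singleton_iff]
  constructor
  · rintro ⟨⟨-, hpos⟩, -, hsum⟩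
    exact List.eq_nil_iff_forall_not_mem.mpr fun a ha =>
      (hpos a ha).ne' (List.sum_eq_zero_iff.mp hsum a ha)
  · rintro rfl
    exact ⟨⟨List.Pairwise.nil, by simp⟩, fun j _ hj => by simp at hj, rfl⟩

theorem aNSq_zero (s : ℕ) : aNSq s 0 = 1 := by
  rw [aNSq_eq_ncard, nonSquashingPartitions_zero, Set.ncard_singleton]

theorem nonSquashingPartitions_finite (s n : ℕ) : (nonSquashingPartitions s n).Finite := by
  have hinj : Set.InjOn (fun l : List ℕ => (l : Multiset ℕ)) (nonSquashingPartitions s n) :=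
    fun a ha b hb h => List.Perm.eq_of_pairwise' ha.1.1 hb.1.1 (Multiset.coe_eq_coe.mp h)
  refine Set.Finite.of_finite_image ((Set.finite_range (Nat.Partition.parts (n := n))).subset ?_) hinj
  rintro _ ⟨l, hl, rfl⟩
  exact ⟨⟨l, fun hp => hl.1.2 _ (by simpa using hp), by simp [hl.2.2]⟩, rfl⟩

open scoped Function in
theorem pairwise_disjoint_nonSquashingPartitions (s : ℕ) :
    Pairwise (Disjoint on nonSquashingPartitions s) :=
  fun _ _ hne => Set.disjoint_left.mpr fun _ hl hl' => hne (hl.2.2.symm.trans hl'.2.2)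

theorem nonSquashingPartitions_eq_image {s n : ℕ} (hs : 2 ≤ s) (hn : 0 < n) :
    nonSquashingPartitions s n = (fun t => t ++ [n - t.sum]) ''
      ⋃ m ∈ (Finset.range (n / s + 1) : Set ℕ), nonSquashingPartitions s m := by
  ext l
  simp only [Set.mem_image, Set.mem_iUnion, Finset.coe_range, Set.mem_Iio, exists_prop]
  constructor
  · intro hl
    obtain ⟨t, p, rfl⟩ : ∃ t p, l = t ++ [p] := by
      have hne : l ≠ [] := by rintro rfl; exact hn.ne hl.2.2
      exact ⟨_, _, (List.dropLast_append_getLast hne).symm⟩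
    obtain ⟨ht, hle, -, hsum⟩ := (concat_mem_nonSquashingPartitions_iff hs).mp hl
    refine ⟨t, ⟨t.sum, ?_, ht⟩, by rw [← hsum, Nat.add_sub_cancel_left]⟩
    rw [Nat.lt_succ_iff, Nat.le_div_iff_mul_le (by omega), mul_comm]
    rw [Nat.sub_one_mul] at hle
    omega
  · rintro ⟨t, ⟨m, hm, ht⟩, rfl⟩
    have hsum : t.sum = m := ht.2.2
    have hsm : s * m ≤ n := by
      rw [mul_comm, ← Nat.le_div_iff_mul_le (by omega)]
      omega
    have h2m : 2 * m ≤ s * m := Nat.mul_le_mul_right m hs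
    refine (concat_mem_nonSquashingPartitions_iff hs).mpr ⟨hsum ▸ ht, ?_, ?_, ?_⟩ <;>
      rw [hsum]
    · rw [Nat.sub_one_mul]; omega
    all_goals omega

theorem aNSq_eq_sum {s n : ℕ} (hs : 2 ≤ s) (hn : 0 < n) :
    aNSq s n = ∑ m ∈ Finset.range (n / s + 1), aNSq s m := by
  have hinj : Function.Injective fun t : List ℕ => t ++ [n - t.sum] :=
    fun _ _ h => (List.append_inj' h rfl).1
  rw [aNSq_eq_ncard, nonSquashingPartitions_eq_image hs hn, Set.ncard_image_of_injective _ hinj,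
    (Finset.finite_toSet _).ncard_biUnion (fun m _ => nonSquashingPartitions_finite s m)
      ((pairwise_disjoint_nonSquashingPartitions s).set_pairwise _),
    finsum_mem_coe_finset]
  rfl

theorem aNSq_succ {s k : ℕ} (hs : 2 ≤ s) (hk : 0 < k) :
    aNSq s (k + 1) = aNSq s k + if s ∣ k + 1 then aNSq s ((k + 1) / s) else 0 := by
  rw [aNSq_eq_sum hs k.succ_pos, aNSq_eq_sum hs hk]
  split_ifs with hd
  · rw [Nat.succ_div, if_pos hd, Finset.sum_range_succ]
  · rw [Nat.succ_div, if_neg hd, add_zero, add_zero]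

theorem stmt_2 (s : ℕ) (hs : 2 ≤ s) :
    (∀ n, s ≤ n → ¬ s ∣ n → aNSq s n = aNSq s (n - 1)) ∧
    (∀ n, s ≤ n → s ∣ n → aNSq s n = aNSq s (n - 1) + aNSq s (n / s)) ∧
    (∀ n, n < s → aNSq s n = 1) := by
  refine ⟨fun n hn hd => ?_, fun n hn hd => ?_, fun n hn => ?_⟩
  · obtain ⟨k, rfl⟩ : ∃ k, n = k + 1 := ⟨n - 1, by omega⟩
    rw [aNSq_succ hs (by omega), if_neg hd, add_zero, Nat.add_sub_cancel]
  · obtain ⟨k, rfl⟩ : ∃ k, n = k + 1 := ⟨n - 1, by omega⟩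
    rw [aNSq_succ hs (by omega), if_pos hd, Nat.add_sub_cancel]
  · rcases n.eq_zero_or_pos with rfl | hn0
    · exact aNSq_zero s
    · rw [aNSq_eq_sum hs hn0, Nat.div_eq_of_lt hn, zero_add, Finset.sum_range_one, aNSq_zero]
end

section
/- The number b(n) of non-squashing partitions of n into distinct parts satisfies the recurrence b(0) = b(1) = 1, b(2m) = b(2m-1) + b(m) - 1 for m ≥ 1, and b(2m+1) = b(2m) + 1 for m ≥ 1. -/
/-- Number of non-squashing partitions of n into distinct parts. -/
noncomputable def b (n : ℕ) : ℕ :=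
  {l : List ℕ | DistinctPartList l ∧ NSq 2 l ∧ l.sum = n}.ncard

/-!
Removing the largest part `x` of a non-squashing partition of `n ≥ 1` into distinct parts leaves
such a partition `t` of `n - x` with `t.sum ≤ x`. Conversely, `t` extends by `x = n - t.sum` exactly
when `2 * t.sum ≤ n` and `x` exceeds every part of `t`; since every part is at most `t.sum ≤ x`, the
latter only fails for `t = [x]`, which happens only when `n = 2x`. Hence `b (2m+1)` and `b (2m) + 1`
both count the partitions with sum at most `m`, and that count grows by `b m` from `m - 1` to `m`.
-/

lemma List.eq_nil_of_sum_eq_zero {t : List ℕ} (hpos : ∀ p ∈ t, 0 < p) (hsum : t.sum = 0) :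
    t = [] :=
  List.eq_nil_iff_forall_not_mem.2 fun p hp => (hpos p hp).ne' (List.sum_eq_zero_iff.1 hsum p hp)

lemma List.eq_singleton_of_sum_eq_of_mem {t : List ℕ} (hpos : ∀ p ∈ t, 0 < p) {y : ℕ}
    (hy : y ∈ t) (hsum : t.sum = y) : t = [y] := by
  obtain ⟨a, c, rfl⟩ := List.append_of_mem hy
  simp only [List.sum_append, List.sum_cons] at hsum
  rw [List.eq_nil_of_sum_eq_zero (fun p hp => hpos p (by simp [hp])) (by omega : a.sum = 0),
    List.eq_nil_of_sum_eq_zero (fun p hp => hpos p (by simp [hp])) (by omega : c.sum = 0)]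
  rfl

namespace NonSquashing

lemma nsq_append_singleton {s x : ℕ} {t : List ℕ} :
    NSq s (t ++ [x]) ↔ NSq s t ∧ (s - 1) * t.sum ≤ x := by
  have getD_last : (t ++ [x]).getD t.length 0 = x := by
    simp [List.getD_eq_getElem?_getD]
  constructor
  · intro h
    refine ⟨fun j hj hjt => ?_, ?_⟩
    · have := h j hj (by simp; omega)
      rwa [List.take_append_of_le_length hjt.le, List.getD_append _ _ _ _ hjt] at this
    · rcases Nat.eq_zero_or_pos t.length with ht | ht
      · simp [List.length_eq_zero_iff.1 ht]
      · simpa [getD_last] using h t.length ht (by simp)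
  · rintro ⟨ht, hx⟩ j hj hjl
    rw [List.length_append, List.length_singleton] at hjl
    rcases (Nat.lt_succ_iff.1 hjl).lt_or_eq with hjt | rfl
    · rw [List.take_append_of_le_length hjt.le, List.getD_append _ _ _ _ hjt]
      exact ht j hj hjt
    · rwa [List.take_left, getD_last]

lemma distinctPartList_append_singleton {x : ℕ} {t : List ℕ} :
    DistinctPartList (t ++ [x]) ↔ DistinctPartList t ∧ (∀ y ∈ t, y < x) ∧ 0 < x := by
  simp only [DistinctPartList, List.pairwise_append, List.pairwise_singleton, List.mem_append,
    List.mem_singleton, forall_eq, true_and]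
  constructor
  · rintro ⟨⟨ht, hlt⟩, hpos⟩
    exact ⟨⟨ht, fun p hp => hpos p (.inl hp)⟩, hlt, hpos x (.inr rfl)⟩
  · rintro ⟨⟨ht, htpos⟩, hlt, hx⟩
    exact ⟨⟨ht, hlt⟩, fun p => Or.rec (htpos p) (· ▸ hx)⟩

lemma forall_lt_iff_ne_singleton {t : List ℕ} (ht : DistinctPartList t) {x : ℕ}
    (hx : t.sum ≤ x) : (∀ y ∈ t, y < x) ↔ t ≠ [x] := by
  refine ⟨fun h hxt => (h x (by simp [hxt])).false, fun hne y hy => ?_⟩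
  have hyx : y ≤ x := (List.le_sum_of_mem hy).trans hx
  refine hyx.lt_of_ne fun hxy => hne ?_
  subst hxy
  exact List.eq_singleton_of_sum_eq_of_mem ht.2 hy (le_antisymm hx (List.le_sum_of_mem hy))

def partitions (n : ℕ) : Set (List ℕ) := {l | DistinctPartList l ∧ NSq 2 l ∧ l.sum = n}

def partitionsUpTo (m : ℕ) : Set (List ℕ) := {l | DistinctPartList l ∧ NSq 2 l ∧ l.sum ≤ m}

/-- The partitions `t` that extend to a partition of `n` by the new largest part `n - t.sum`;
`t ≠ [n - t.sum]` is what the new part being distinct from the old ones amounts to. -/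
def prefixes (n : ℕ) : Set (List ℕ) :=
  {t | DistinctPartList t ∧ NSq 2 t ∧ 2 * t.sum ≤ n ∧ t ≠ [n - t.sum]}

lemma b_eq_ncard_partitions (n : ℕ) : b n = (partitions n).ncard := rfl

lemma append_singleton_mem_partitions {n x : ℕ} {t : List ℕ} :
    t ++ [x] ∈ partitions n ↔
      DistinctPartList t ∧ NSq 2 t ∧ (∀ y ∈ t, y < x) ∧ 0 < x ∧ t.sum ≤ x ∧ t.sum + x = n := by
  simp only [partitions, Set.mem_ofPred_eq, distinctPartList_append_singleton,
    nsq_append_singleton, List.sum_append, List.sum_singleton, Nat.add_one_sub_one, one_mul]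
  tauto

lemma partitions_eq_image_prefixes {n : ℕ} (hn : 0 < n) :
    partitions n = (fun t => t ++ [n - t.sum]) '' prefixes n := by
  ext l
  constructor
  · intro hl
    obtain ⟨t, x, rfl⟩ : ∃ t x, l = t ++ [x] := by
      refine (l.eq_nil_or_concat').resolve_left ?_
      rintro rfl
      exact hn.ne hl.2.2
    obtain ⟨ht, htn, hlt, -, hle, hsum⟩ := append_singleton_mem_partitions.1 hl
    obtain rfl : x = n - t.sum := by omega
    exact ⟨t, ⟨ht, htn, by omega, (forall_lt_iff_ne_singleton ht hle).1 hlt⟩, rfl⟩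
  · rintro ⟨t, ⟨ht, htn, hle, hne⟩, rfl⟩
    have hlt := (forall_lt_iff_ne_singleton ht (by omega)).2 hne
    exact append_singleton_mem_partitions.2 ⟨ht, htn, hlt, by omega, by omega, by omega⟩

lemma ncard_partitions_eq_ncard_prefixes {n : ℕ} (hn : 0 < n) :
    (partitions n).ncard = (prefixes n).ncard := by
  rw [partitions_eq_image_prefixes hn]
  exact Set.ncard_image_of_injective _ fun t₁ t₂ h => by
    simpa using congrArg List.dropLast h

lemma prefixes_two_mul_add_one (m : ℕ) : prefixes (2 * m + 1) = partitionsUpTo m := by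
  ext t
  simp only [prefixes, partitionsUpTo, Set.mem_ofPred_eq]
  refine and_congr_right' (and_congr_right' ⟨fun h => by omega, fun h => ⟨by omega, ?_⟩⟩)
  intro ht
  have := congrArg List.sum ht
  simp only [List.sum_singleton] at this
  omega

lemma prefixes_two_mul (m : ℕ) : prefixes (2 * m) = partitionsUpTo m \ {[m]} := by
  ext t
  simp only [prefixes, partitionsUpTo, Set.mem_sdiff, Set.mem_ofPred_eq, Set.mem_singleton_iff]
  constructor
  · rintro ⟨ht, htn, hle, hne⟩
    refine ⟨⟨ht, htn, by omega⟩, ?_⟩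
    rintro rfl
    exact hne (by simp; omega)
  · rintro ⟨⟨ht, htn, hle⟩, hne⟩
    refine ⟨ht, htn, by omega, fun h => hne ?_⟩
    have := congrArg List.sum h
    simp only [List.sum_singleton] at this
    rwa [show 2 * m - t.sum = m by omega] at h

lemma partitionsUpTo_finite (m : ℕ) : (partitionsUpTo m).Finite := by
  refine ((Finset.range (m + 1)).powerset.image (Finset.sort · (· ≤ ·))).finite_toSet.subset ?_
  rintro t ⟨⟨hsort, -⟩, -, hsum⟩
  simp only [Finset.coe_image, Set.mem_image, Finset.mem_coe, Finset.mem_powerset]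
  refine ⟨t.toFinset, fun y hy => ?_, (List.toFinset_sort _ hsort.nodup).2 (hsort.imp le_of_lt)⟩
  have := List.le_sum_of_mem (List.mem_toFinset.1 hy)
  simp only [Finset.mem_range]
  omega

lemma partitionsUpTo_succ (m : ℕ) :
    partitionsUpTo (m + 1) = partitionsUpTo m ∪ partitions (m + 1) := by
  ext t
  simp only [partitionsUpTo, partitions, Set.mem_union, Set.mem_ofPred_eq, Nat.le_succ_iff,
    and_or_left]

lemma ncard_partitionsUpTo_succ (m : ℕ) :
    (partitionsUpTo (m + 1)).ncard = (partitionsUpTo m).ncard + b (m + 1) := by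
  rw [partitionsUpTo_succ, b_eq_ncard_partitions, Set.ncard_union_eq _ (partitionsUpTo_finite m)
    ((partitionsUpTo_finite (m + 1)).subset fun l hl => ⟨hl.1, hl.2.1, hl.2.2.le⟩)]
  exact Set.disjoint_left.2 fun t ht ht' => by have := ht.2.2; have := ht'.2.2; omega

lemma partitions_zero : partitions 0 = {[]} := by
  ext l
  refine ⟨fun ⟨hl, _, hsum⟩ => List.eq_nil_of_sum_eq_zero hl.2 hsum, ?_⟩
  rintro rfl
  exact ⟨⟨.nil, by simp⟩, fun j _ hj => absurd hj (by simp), rfl⟩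

lemma partitionsUpTo_zero : partitionsUpTo 0 = {[]} := by
  simp only [← partitions_zero, partitionsUpTo, partitions, Nat.le_zero]

lemma b_odd_eq_ncard_partitionsUpTo (m : ℕ) : b (2 * m + 1) = (partitionsUpTo m).ncard := by
  rw [b_eq_ncard_partitions, ncard_partitions_eq_ncard_prefixes (by omega),
    prefixes_two_mul_add_one]

lemma b_even_add_one_eq_ncard_partitionsUpTo {m : ℕ} (hm : 0 < m) :
    b (2 * m) + 1 = (partitionsUpTo m).ncard := by
  rw [b_eq_ncard_partitions, ncard_partitions_eq_ncard_prefixes (by omega), prefixes_two_mul]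
  refine Set.ncard_sdiff_singleton_add_one ?_ (partitionsUpTo_finite m)
  exact ⟨⟨List.pairwise_singleton _ m, by simpa⟩, fun j _ hj => absurd hj (by simp; omega),
    (List.sum_singleton).le⟩

end NonSquashing

open NonSquashing

theorem stmt_4 :
    b 0 = 1 ∧ b 1 = 1 ∧
    (∀ m, 1 ≤ m → b (2 * m) = b (2 * m - 1) + b m - 1) ∧
    (∀ m, 1 ≤ m → b (2 * m + 1) = b (2 * m) + 1) := by
  refine ⟨?_, ?_, fun m hm => ?_, fun m hm => ?_⟩
  · rw [b_eq_ncard_partitions, partitions_zero, Set.ncard_singleton]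
  · simpa [partitionsUpTo_zero] using b_odd_eq_ncard_partitionsUpTo 0
  · obtain ⟨k, rfl⟩ := Nat.exists_eq_add_of_le' hm
    have h_even := b_even_add_one_eq_ncard_partitionsUpTo k.add_one_pos
    rw [ncard_partitionsUpTo_succ, ← b_odd_eq_ncard_partitionsUpTo] at h_even
    rw [show 2 * (k + 1) - 1 = 2 * k + 1 by omega]
    omega
  · have h_even := b_even_add_one_eq_ncard_partitionsUpTo hm
    rw [b_odd_eq_ncard_partitionsUpTo, ← h_even]
end

section
/- The number b(n) of non-squashing partitions of n into distinct parts equals the number of partitions of n into powers of 2 such that either all parts equal 1, or, if the largest part is 2^i with i ≥ 1, there is at least one part equal to 2^{i-1}. -/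
/-!
List a distinct non-squashing partition from its largest part down, `p_k > ⋯ > p_1`, and put
`d_j = p_j - (p_1 + ⋯ + p_{j-1})`. Then `n = ∑ d_j 2^(k-j)`, so the partition corresponds to the
binary partition with `d_j` parts equal to `2^(k-j)`: its largest part `2^(k-1)` occurs
`d_1 = p_1 > 0` times, and distinctness `p_1 < p_2` says exactly that `d_2 > 0`, i.e. that
`2^(k-2)` occurs.
Recursively, `p :: r` is sent to `p - ∑ r` ones together with the doubled image of `r`; a binary
partition is split back into its ones and the halves of its other parts.
-/

def IsBinaryPartList (t : List ℕ) : Prop :=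
  IsPartList t ∧ ∀ p ∈ t, ∃ i, p = 2 ^ i

def HasHalfOfLargestPart (t : List ℕ) : Prop :=
  (∀ p ∈ t, p = 1) ∨ ∃ i, 1 ≤ i ∧ (2 : ℕ) ^ i ∈ t ∧ (∀ p ∈ t, p ≤ 2 ^ i) ∧ (2 : ℕ) ^ (i - 1) ∈ t

lemma exists_two_mul_eq_two_pow_iff {y : ℕ} : (∃ i, 2 * y = 2 ^ i) ↔ ∃ i, y = 2 ^ i := by
  constructor
  · rintro ⟨_ | i, h⟩
    · omega
    · exact ⟨i, by rw [pow_succ'] at h; omega⟩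
  · rintro ⟨i, rfl⟩
    exact ⟨i + 1, (pow_succ' 2 i).symm⟩

def onesAndDouble (a : ℕ) (u : List ℕ) : List ℕ :=
  List.replicate a 1 ++ u.map (2 * ·)

section onesAndDouble

variable {a : ℕ} {u : List ℕ}

@[simp]
lemma sum_onesAndDouble : (onesAndDouble a u).sum = a + 2 * u.sum := by
  simp only [onesAndDouble, List.sum_append, List.sum_replicate, smul_eq_mul, mul_one]
  rw [List.sum_map_mul_left, List.map_id']

lemma mem_onesAndDouble {x : ℕ} :
    x ∈ onesAndDouble a u ↔ (0 < a ∧ x = 1) ∨ ∃ y ∈ u, 2 * y = x := by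
  simp [onesAndDouble, Nat.pos_iff_ne_zero]

lemma one_mem_onesAndDouble : 1 ∈ onesAndDouble a u ↔ 0 < a := by
  simp [onesAndDouble, Nat.pos_iff_ne_zero]

lemma two_pow_succ_mem_onesAndDouble {j : ℕ} : 2 ^ (j + 1) ∈ onesAndDouble a u ↔ 2 ^ j ∈ u := by
  simp only [mem_onesAndDouble, pow_succ']
  have : (2 : ℕ) * 2 ^ j ≠ 1 := by omega
  simp [this]

lemma forall_le_two_pow_succ_onesAndDouble {j : ℕ} :
    (∀ p ∈ onesAndDouble a u, p ≤ 2 ^ (j + 1)) ↔ ∀ p ∈ u, p ≤ 2 ^ j := by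
  simp only [mem_onesAndDouble, pow_succ']
  have : 1 ≤ 2 * 2 ^ j := by have := @Nat.one_le_two_pow j; omega
  constructor
  · intro h y hy
    have := h (2 * y) (Or.inr ⟨y, hy, rfl⟩)
    omega
  · rintro h p (⟨-, rfl⟩ | ⟨y, hy, rfl⟩)
    · exact this
    · have := h y hy
      omega

lemma onesAndDouble_injective : Function.Injective2 onesAndDouble := by
  intro a a' u u' h
  have count_one : ∀ a u, (onesAndDouble a u).count 1 = a := by
    intro a u
    simp [onesAndDouble, List.count_eq_zero]
  obtain rfl : a = a' := by rw [← count_one a u, h, count_one]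
  refine ⟨rfl, List.map_injective_iff.2 (fun x y hxy => ?_) (List.append_cancel_left h)⟩
  omega

lemma isBinaryPartList_onesAndDouble_iff :
    IsBinaryPartList (onesAndDouble a u) ↔ IsBinaryPartList u := by
  simp only [IsBinaryPartList, IsPartList, onesAndDouble, List.pairwise_append,
    List.pairwise_replicate, List.pairwise_map, List.mem_append, List.mem_replicate, List.mem_map]
  constructor
  · rintro ⟨⟨⟨-, hsorted, -⟩, hpos⟩, hpow⟩
    refine ⟨⟨hsorted.imp (by omega), fun y hy => ?_⟩, fun y hy => ?_⟩
    · have := hpos (2 * y) (Or.inr ⟨y, hy, rfl⟩)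
      omega
    · exact exists_two_mul_eq_two_pow_iff.1 (hpow _ (Or.inr ⟨y, hy, rfl⟩))
  · rintro ⟨⟨hsorted, hpos⟩, hpow⟩
    refine ⟨⟨⟨Or.inr le_rfl, hsorted.imp (by omega), ?_⟩, ?_⟩, ?_⟩
    · rintro _ ⟨-, rfl⟩ _ ⟨y, hy, rfl⟩
      have := hpos y hy
      omega
    · rintro _ (⟨-, rfl⟩ | ⟨y, hy, rfl⟩)
      · exact one_pos
      · exact Nat.mul_pos two_pos (hpos y hy)
    · rintro _ (⟨-, rfl⟩ | ⟨y, hy, rfl⟩)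
      · exact ⟨0, rfl⟩
      · exact exists_two_mul_eq_two_pow_iff.2 (hpow y hy)

lemma IsBinaryPartList.exists_eq_onesAndDouble {t : List ℕ} (ht : IsBinaryPartList t) :
    ∃ a u, t = onesAndDouble a u := by
  induction t with
  | nil => exact ⟨0, [], rfl⟩
  | cons x t ih =>
    obtain ⟨⟨hsorted, hpos⟩, hpow⟩ := ht
    rw [List.pairwise_cons] at hsorted
    obtain ⟨a, u, rfl⟩ := ih ⟨⟨hsorted.2, fun p hp => hpos p (.tail x hp)⟩,
      fun p hp => hpow p (.tail x hp)⟩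
    obtain ⟨_ | i, rfl⟩ := hpow x (.head _)
    · exact ⟨a + 1, u, rfl⟩
    · obtain rfl : a = 0 := by
        by_contra ha
        have hle := hsorted.1 1 (one_mem_onesAndDouble.2 (Nat.pos_of_ne_zero ha))
        have := @Nat.one_le_two_pow i
        rw [pow_succ] at hle
        omega
      exact ⟨0, 2 ^ i :: u, by simp [onesAndDouble, pow_succ']⟩

lemma hasHalfOfLargestPart_onesAndDouble_iff (hu : u ≠ []) (hpos : ∀ p ∈ u, 0 < p) :
    HasHalfOfLargestPart (onesAndDouble a u) ↔
      HasHalfOfLargestPart u ∧ ((∀ p ∈ u, p = 1) → 0 < a) := by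
  obtain ⟨y, hy⟩ := List.exists_mem_of_ne_nil u hu
  constructor
  · rintro (hall | ⟨_ | _ | j, hi, htop, hle, hhalf⟩)
    · have := hall (2 * y) (mem_onesAndDouble.2 (Or.inr ⟨y, hy, rfl⟩))
      omega
    · omega
    · rw [forall_le_two_pow_succ_onesAndDouble] at hle
      have hones : ∀ p ∈ u, p = 1 := fun p hp => le_antisymm (hle p hp) (hpos p hp)
      exact ⟨Or.inl hones, fun _ => one_mem_onesAndDouble.1 hhalf⟩
    · rw [two_pow_succ_mem_onesAndDouble] at htop
      rw [forall_le_two_pow_succ_onesAndDouble] at hle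
      rw [Nat.add_sub_cancel, two_pow_succ_mem_onesAndDouble] at hhalf
      refine ⟨Or.inr ⟨j + 1, by omega, htop, hle, hhalf⟩, fun hones => ?_⟩
      have := hones _ htop
      rw [pow_succ] at this
      omega
  · rintro ⟨hall | ⟨i, hi, htop, hle, hhalf⟩, hones⟩
    · refine Or.inr ⟨1, le_rfl, ?_, ?_, ?_⟩
      · rw [two_pow_succ_mem_onesAndDouble, pow_zero, ← hall y hy]
        exact hy
      · rw [forall_le_two_pow_succ_onesAndDouble]
        exact fun p hp => (hall p hp).le
      · exact one_mem_onesAndDouble.2 (hones hall)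
    · obtain ⟨j, rfl⟩ : ∃ j, i = j + 1 := ⟨i - 1, by omega⟩
      refine Or.inr ⟨j + 2, by omega, ?_, ?_, ?_⟩
      · exact two_pow_succ_mem_onesAndDouble.2 htop
      · exact forall_le_two_pow_succ_onesAndDouble.2 hle
      · exact two_pow_succ_mem_onesAndDouble.2 hhalf

end onesAndDouble

def NonSquashingDesc : List ℕ → Prop
  | [] => True
  | p :: r => NonSquashingDesc r ∧ 0 < p ∧ (∀ q ∈ r, q < p) ∧ r.sum ≤ p

lemma nSq_append_singleton {s p : ℕ} {l : List ℕ} :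
    NSq s (l ++ [p]) ↔ NSq s l ∧ (s - 1) * l.sum ≤ p := by
  have prefix_eq : ∀ j < l.length, (s - 1) * ((l ++ [p]).take j).sum ≤ (l ++ [p]).getD j 0 ↔
      (s - 1) * (l.take j).sum ≤ l.getD j 0 := fun j hj => by
    rw [List.take_append_of_le_length hj.le, List.getD_append _ _ _ _ hj]
  have last_eq : (s - 1) * ((l ++ [p]).take l.length).sum ≤ (l ++ [p]).getD l.length 0 ↔
      (s - 1) * l.sum ≤ p := by
    rw [List.take_left, List.getD_append_right _ _ _ _ le_rfl, Nat.sub_self]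
    rfl
  simp only [NSq, List.length_append, List.length_singleton]
  constructor
  · intro h
    refine ⟨fun j hj hjl => (prefix_eq j hjl).1 (h j hj (by omega)), ?_⟩
    rcases Nat.eq_zero_or_pos l.length with hl | hl
    · simp [List.length_eq_zero_iff.1 hl]
    · exact last_eq.1 (h _ hl (by omega))
  · rintro ⟨h, hp⟩ j hj hjl
    rcases Nat.lt_or_ge j l.length with hjl' | hjl'
    · exact (prefix_eq j hjl').2 (h j hj hjl')
    · obtain rfl : j = l.length := by omega
      exact last_eq.2 hp

lemma distinctPartList_append_singleton {p : ℕ} {l : List ℕ} :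
    DistinctPartList (l ++ [p]) ↔ DistinctPartList l ∧ (∀ q ∈ l, q < p) ∧ 0 < p := by
  simp only [DistinctPartList, List.pairwise_append, List.pairwise_singleton, List.mem_append,
    List.mem_singleton, true_and, or_imp, forall_and, forall_eq]
  tauto

lemma nonSquashingDesc_iff :
    ∀ l : List ℕ, NonSquashingDesc l ↔ DistinctPartList l.reverse ∧ NSq 2 l.reverse
  | [] => by simp [NonSquashingDesc, DistinctPartList, NSq]
  | p :: r => by
    rw [List.reverse_cons, distinctPartList_append_singleton, nSq_append_singleton,
      NonSquashingDesc, nonSquashingDesc_iff r]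
    simp only [List.mem_reverse, List.sum_reverse, Nat.add_one_sub_one, one_mul]
    tauto

namespace NonSquashingDesc

lemma sum_pos {l : List ℕ} (hl : NonSquashingDesc l) (hne : l ≠ []) : 0 < l.sum := by
  obtain _ | ⟨p, r⟩ := l
  · exact absurd rfl hne
  · simp only [List.sum_cons]
    have := hl.2.1
    omega

lemma lt_sum {l : List ℕ} (hl : NonSquashingDesc l) (hlen : 1 < l.length) :
    ∀ q ∈ l, q < l.sum := by
  obtain _ | ⟨p, _ | ⟨q, r⟩⟩ := l
  · simp at hlen
  · simp at hlen
  · obtain ⟨hr, -, hlt, -⟩ := hl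
    have := hr.sum_pos (List.cons_ne_nil q r)
    intro x hx
    rw [List.sum_cons]
    rcases List.mem_cons.1 hx with rfl | hx
    · omega
    · have := hlt x hx
      omega

end NonSquashingDesc

def binaryPartition : List ℕ → List ℕ
  | [] => []
  | p :: r => onesAndDouble (p - r.sum) (binaryPartition r)

lemma isBinaryPartList_binaryPartition : ∀ l : List ℕ, IsBinaryPartList (binaryPartition l)
  | [] => ⟨⟨List.Pairwise.nil, by simp [binaryPartition]⟩, by simp [binaryPartition]⟩
  | _ :: r => isBinaryPartList_onesAndDouble_iff.2 (isBinaryPartList_binaryPartition r)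

lemma sum_binaryPartition : ∀ {l : List ℕ}, NonSquashingDesc l → (binaryPartition l).sum = l.sum
  | [], _ => rfl
  | p :: r, ⟨hr, _, _, hle⟩ => by
    rw [binaryPartition, sum_onesAndDouble, sum_binaryPartition hr, List.sum_cons]
    omega

lemma binaryPartition_ne_nil {l : List ℕ} (hl : NonSquashingDesc l) (hne : l ≠ []) :
    binaryPartition l ≠ [] := by
  intro h
  have := hl.sum_pos hne
  rw [← sum_binaryPartition hl, h, List.sum_nil] at this
  exact this.false

lemma forall_eq_one_binaryPartition_iff {l : List ℕ} (hl : NonSquashingDesc l) :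
    (∀ x ∈ binaryPartition l, x = 1) ↔ l.length ≤ 1 := by
  obtain _ | ⟨p, _ | ⟨q, r⟩⟩ := l
  · simp [binaryPartition]
  · simp [binaryPartition, onesAndDouble, List.mem_replicate]
  · obtain ⟨y, hy⟩ :=
      List.exists_mem_of_ne_nil _ (binaryPartition_ne_nil hl.1 (List.cons_ne_nil q r))
    refine iff_of_false (fun hall => ?_) (by simp)
    have := hall (2 * y) (mem_onesAndDouble.2 (Or.inr ⟨y, hy, rfl⟩))
    omega

lemma binaryPartition_injOn : Set.InjOn binaryPartition {l | NonSquashingDesc l} := by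
  intro l₁ hl₁ l₂ hl₂ h
  induction l₁ generalizing l₂ with
  | nil =>
    obtain _ | ⟨p, r⟩ := l₂
    · rfl
    · exact absurd h.symm (binaryPartition_ne_nil hl₂ (List.cons_ne_nil p r))
  | cons p₁ r₁ ih =>
    obtain _ | ⟨p₂, r₂⟩ := l₂
    · exact absurd h (binaryPartition_ne_nil hl₁ (List.cons_ne_nil p₁ r₁))
    · obtain ⟨hr₁, -, -, hle₁⟩ := hl₁
      obtain ⟨hr₂, -, -, hle₂⟩ := hl₂
      obtain ⟨hp, hr⟩ := onesAndDouble_injective h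
      obtain rfl := ih hr₁ hr₂ hr
      rw [show p₁ = p₂ by omega]

lemma hasHalfOfLargestPart_binaryPartition :
    ∀ {l : List ℕ}, NonSquashingDesc l → HasHalfOfLargestPart (binaryPartition l)
  | [], _ => Or.inl (by simp [binaryPartition])
  | p :: r, ⟨hr, _, hlt, _⟩ => by
    rcases eq_or_ne r [] with rfl | hne
    · exact Or.inl (by simp [binaryPartition, onesAndDouble])
    · rw [binaryPartition, hasHalfOfLargestPart_onesAndDouble_iff (binaryPartition_ne_nil hr hne)
        (isBinaryPartList_binaryPartition r).1.2]
      refine ⟨hasHalfOfLargestPart_binaryPartition hr, fun hones => ?_⟩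
      rw [forall_eq_one_binaryPartition_iff hr] at hones
      obtain ⟨q, rfl⟩ : ∃ q, r = [q] :=
        List.length_eq_one_iff.1 (by have := List.length_pos_of_ne_nil hne; omega)
      have := hlt q (List.mem_singleton_self q)
      simp only [List.sum_singleton]
      omega

lemma exists_binaryPartition_eq {t : List ℕ} (ht : IsBinaryPartList t)
    (hcond : HasHalfOfLargestPart t) :
    ∃ l, NonSquashingDesc l ∧ binaryPartition l = t := by
  induction hsum : t.sum using Nat.strong_induction_on generalizing t with
  | _ n ih =>
  obtain ⟨a, u, rfl⟩ := ht.exists_eq_onesAndDouble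
  rw [isBinaryPartList_onesAndDouble_iff] at ht
  rcases eq_or_ne u [] with rfl | hu
  · rcases Nat.eq_zero_or_pos a with rfl | ha
    · exact ⟨[], trivial, rfl⟩
    · exact ⟨[a], ⟨trivial, ha, by simp, by simp⟩, by simp [binaryPartition]⟩
  rw [hasHalfOfLargestPart_onesAndDouble_iff hu ht.1.2] at hcond
  have hlt : u.sum < n := by
    have := List.sum_pos u ht.1.2 hu
    rw [← hsum, sum_onesAndDouble]
    omega
  obtain ⟨r, hr, rfl⟩ := ih _ hlt ht hcond.1 rfl
  have hrne : r ≠ [] := by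
    rintro rfl
    exact hu rfl
  have hr_pos := hr.sum_pos hrne
  refine ⟨(a + r.sum) :: r, ⟨hr, by omega, fun q hq => ?_, by omega⟩, by simp [binaryPartition]⟩
  rcases Nat.lt_or_ge 1 r.length with hlen | hlen
  · have := hr.lt_sum hlen q hq
    omega
  · have := hcond.2 ((forall_eq_one_binaryPartition_iff hr).2 hlen)
    have := List.le_sum_of_mem hq
    omega

lemma ncard_nonSquashingDesc (n : ℕ) : {l | NonSquashingDesc l ∧ l.sum = n}.ncard = b n := by
  rw [b, ← Set.ncard_image_of_injective _ List.reverse_injective,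
    Set.image_eq_preimage_of_inverse List.reverse_involutive List.reverse_involutive]
  congr 1
  ext l
  simp [nonSquashingDesc_iff, and_assoc]

lemma image_binaryPartition (n : ℕ) :
    binaryPartition '' {l | NonSquashingDesc l ∧ l.sum = n} =
      {t | IsBinaryPartList t ∧ t.sum = n ∧ HasHalfOfLargestPart t} := by
  ext t
  constructor
  · rintro ⟨l, ⟨hl, rfl⟩, rfl⟩
    exact ⟨isBinaryPartList_binaryPartition l, sum_binaryPartition hl,
      hasHalfOfLargestPart_binaryPartition hl⟩
  · rintro ⟨ht, rfl, hcond⟩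
    obtain ⟨l, hl, rfl⟩ := exists_binaryPartition_eq ht hcond
    exact ⟨l, ⟨hl, (sum_binaryPartition hl).symm⟩, rfl⟩

theorem stmt_7 (n : ℕ) :
    b n = {l : List ℕ | IsPartList l ∧ (∀ p ∈ l, ∃ i, p = 2 ^ i) ∧ l.sum = n ∧
      ((∀ p ∈ l, p = 1) ∨
        ∃ i, 1 ≤ i ∧ (2 : ℕ) ^ i ∈ l ∧ (∀ p ∈ l, p ≤ 2 ^ i) ∧ (2 : ℕ) ^ (i - 1) ∈ l)}.ncard := by
  rw [← ncard_nonSquashingDesc, ← binaryPartition_injOn.mono (fun _ h => h.1) |>.ncard_image,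
    image_binaryPartition]
  simp only [IsBinaryPartList, HasHalfOfLargestPart, and_assoc]
end

section
/- For all m ≥ 0, b(16m+4) is even and b(16m+12) is odd, where b(n) is the number of non-squashing partitions of n into distinct parts. -/
def nonSquashing (n : ℕ) : Set (List ℕ) :=
  {l | DistinctPartList l ∧ NSq 2 l ∧ l.sum = n}

def nonSquashingLE (k : ℕ) : Set (List ℕ) :=
  {l | DistinctPartList l ∧ NSq 2 l ∧ l.sum ≤ k}

lemma b_eq_ncard_nonSquashing (n : ℕ) : b n = (nonSquashing n).ncard := rfl

lemma nsq_two_append_singleton_iff {l : List ℕ} {p : ℕ} :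
    NSq 2 (l ++ [p]) ↔ NSq 2 l ∧ l.sum ≤ p := by
  have prefix_eq : ∀ j < l.length,
      (List.take j (l ++ [p])).sum ≤ (l ++ [p]).getD j 0 ↔ (List.take j l).sum ≤ l.getD j 0 :=
    fun j hj => by rw [List.take_append_of_le_length hj.le, List.getD_append _ _ _ _ hj]
  have last_eq : (List.take l.length (l ++ [p])).sum ≤ (l ++ [p]).getD l.length 0 ↔ l.sum ≤ p := by
    simp
  simp only [NSq, List.length_append, List.length_singleton, Nat.add_one_sub_one, one_mul]
  constructor
  · intro h
    refine ⟨fun j hj hjl => (prefix_eq j hjl).1 (h j hj (by omega)), ?_⟩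
    rcases Nat.eq_zero_or_pos l.length with hl | hl
    · simp [List.eq_nil_of_length_eq_zero hl]
    · exact last_eq.1 (h l.length hl (by omega))
  · rintro ⟨h, hsum⟩ j hj hjl
    rcases (Nat.lt_succ_iff.mp hjl).lt_or_eq with hjl | rfl
    · exact (prefix_eq j hjl).2 (h j hj hjl)
    · exact last_eq.2 hsum

lemma distinctPartList_append_singleton_iff {l : List ℕ} {p : ℕ} :
    DistinctPartList (l ++ [p]) ↔ DistinctPartList l ∧ 0 < p ∧ ∀ a ∈ l, a < p := by
  simp only [DistinctPartList, List.pairwise_append, List.mem_append, List.mem_singleton,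
    List.pairwise_singleton, forall_eq, true_and, or_imp, forall_and]
  tauto

lemma eq_singleton_of_mem_of_sum_eq {l : List ℕ} (hpos : ∀ a ∈ l, 0 < a) {a : ℕ}
    (ha : a ∈ l) (hsum : l.sum = a) : l = [a] := by
  obtain ⟨s, t, rfl⟩ := List.append_of_mem ha
  have hs : s.sum = 0 ∧ t.sum = 0 := by simp at hsum; omega
  have hst : s = [] ∧ t = [] := by
    simp only [List.sum_eq_zero_iff, List.eq_nil_iff_forall_not_mem] at hs ⊢
    exact ⟨fun x hx => (hpos x (by simp [hx])).ne' (hs.1 x hx),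
      fun x hx => (hpos x (by simp [hx])).ne' (hs.2 x hx)⟩
  simp [hst]

lemma forall_lt_of_sum_le_of_ne_singleton {l : List ℕ} (hpos : ∀ a ∈ l, 0 < a) {p : ℕ}
    (hsum : l.sum ≤ p) (hne : l ≠ [p]) : ∀ a ∈ l, a < p := by
  intro a ha
  have hle : a ≤ l.sum := List.le_sum_of_mem ha
  refine lt_of_le_of_ne (hle.trans hsum) fun hap => hne ?_
  subst hap
  exact eq_singleton_of_mem_of_sum_eq hpos ha (le_antisymm hsum hle)

lemma nonSquashing_append_singleton_iff {l : List ℕ} {p : ℕ} (hp : 0 < p) :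
    DistinctPartList (l ++ [p]) ∧ NSq 2 (l ++ [p]) ↔
      DistinctPartList l ∧ NSq 2 l ∧ l.sum ≤ p ∧ l ≠ [p] := by
  rw [distinctPartList_append_singleton_iff, nsq_two_append_singleton_iff]
  constructor
  · rintro ⟨⟨hl, -, hlt⟩, hnsq, hsum⟩
    exact ⟨hl, hnsq, hsum, fun h => (hlt p (by simp [h])).false⟩
  · rintro ⟨hl, hnsq, hsum, hne⟩
    exact ⟨⟨hl, hp, forall_lt_of_sum_le_of_ne_singleton hl.2 hsum hne⟩, hnsq, hsum⟩

-- For odd `n` the excluded list `[n - n / 2]` has sum `> n / 2`, so only even `n` lose an element.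
lemma nonSquashing_eq_image {n : ℕ} (hn : 0 < n) :
    nonSquashing n =
      (fun l => l ++ [n - l.sum]) '' (nonSquashingLE (n / 2) \ {[n - n / 2]}) := by
  ext l
  constructor
  · rintro ⟨hdist, hnsq, hsum⟩
    obtain ⟨l', p, rfl⟩ : ∃ l' p, l = l' ++ [p] := by
      rcases l.eq_nil_or_concat' with rfl | h
      · simp at hsum; omega
      · exact h
    have hp : 0 < p := hdist.2 p (by simp)
    obtain ⟨hl', hnsq', hle, hne⟩ := (nonSquashing_append_singleton_iff hp).1 ⟨hdist, hnsq⟩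
    simp only [List.sum_append, List.sum_singleton] at hsum
    refine ⟨l', ⟨⟨hl', hnsq', by omega⟩, fun h => hne ?_⟩, by simp only; congr; omega⟩
    rw [Set.mem_singleton_iff] at h
    have := congrArg List.sum h
    simp only [List.sum_singleton] at this
    exact h.trans (by congr 1; omega)
  · rintro ⟨l', ⟨⟨hl', hnsq', hle⟩, hne⟩, rfl⟩
    have hne' : l' ≠ [n - l'.sum] := by
      intro h
      have := congrArg List.sum h
      simp only [List.sum_singleton] at this
      exact hne (h.trans (by congr 1; omega))
    obtain ⟨hdist, hnsq⟩ :=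
      (nonSquashing_append_singleton_iff (by omega)).2 ⟨hl', hnsq', by omega, hne'⟩
    exact ⟨hdist, hnsq, by simp only [List.sum_append, List.sum_singleton]; omega⟩

lemma nonSquashingLE_finite (k : ℕ) : (nonSquashingLE k).Finite := by
  refine (List.finite_toSet (List.range (k + 1)).sublists).subset fun l ⟨hl, _, hsum⟩ => ?_
  have hsub : l ⊆ List.range (k + 1) := fun a ha =>
    List.mem_range.2 (Nat.lt_succ_of_le ((List.le_sum_of_mem ha).trans hsum))
  exact List.mem_sublists.2 <| List.sublist_of_subperm_of_pairwise
    (List.subperm_of_subset hl.1.nodup hsub) hl.1 List.pairwise_lt_range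

lemma singleton_mem_nonSquashingLE {p : ℕ} (hp : 0 < p) : [p] ∈ nonSquashingLE p :=
  ⟨⟨List.pairwise_singleton _ _, by simpa using hp⟩, fun _ _ hjl => by simp at hjl; omega,
    by simp⟩

lemma b_eq_ncard_nonSquashingLE_sdiff {n : ℕ} (hn : 0 < n) :
    b n = (nonSquashingLE (n / 2) \ {[n - n / 2]}).ncard := by
  rw [b_eq_ncard_nonSquashing, nonSquashing_eq_image hn]
  exact Set.InjOn.ncard_image fun _ _ _ _ h => List.append_inj_left' h rfl

lemma b_two_mul_add_one_eq_ncard (m : ℕ) : b (2 * m + 1) = (nonSquashingLE m).ncard := by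
  have h₁ : (2 * m + 1) / 2 = m := by omega
  rw [b_eq_ncard_nonSquashingLE_sdiff (by omega), h₁,
    Set.sdiff_singleton_eq_self fun h => by have := h.2.2; simp at this; omega]

lemma b_two_mul_add_two_add_one_eq_ncard (m : ℕ) :
    b (2 * m + 2) + 1 = (nonSquashingLE (m + 1)).ncard := by
  have h₁ : (2 * m + 2) / 2 = m + 1 := by omega
  have h₂ : 2 * m + 2 - (m + 1) = m + 1 := by omega
  rw [b_eq_ncard_nonSquashingLE_sdiff (by omega), h₁, h₂]
  exact Set.ncard_sdiff_singleton_add_one (singleton_mem_nonSquashingLE (by omega))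
    (nonSquashingLE_finite _)

lemma nonSquashingLE_zero : nonSquashingLE 0 = {[]} := by
  ext l
  constructor
  · rintro ⟨⟨-, hpos⟩, -, hsum⟩
    exact List.eq_nil_iff_forall_not_mem.2 fun a ha =>
      (hpos a ha).ne' (List.sum_eq_zero_iff.1 (Nat.le_zero.1 hsum) a ha)
  · rintro rfl
    exact ⟨⟨List.Pairwise.nil, by simp⟩, fun j _ h => by simp at h, le_rfl⟩

lemma nonSquashingLE_succ (k : ℕ) :
    nonSquashingLE (k + 1) = nonSquashingLE k ∪ nonSquashing (k + 1) := by
  ext l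
  show _ ∧ _ ∧ _ ↔ (_ ∧ _ ∧ _) ∨ (_ ∧ _ ∧ _)
  rw [Nat.le_add_one_iff]
  tauto

lemma ncard_nonSquashingLE_succ (k : ℕ) :
    (nonSquashingLE (k + 1)).ncard = (nonSquashingLE k).ncard + b (k + 1) := by
  rw [nonSquashingLE_succ, b_eq_ncard_nonSquashing]
  refine Set.ncard_union_eq (Set.disjoint_left.2 fun l hl hl' => ?_) (nonSquashingLE_finite k)
    ((nonSquashingLE_finite (k + 1)).subset fun l hl => ⟨hl.1, hl.2.1, hl.2.2.le⟩)
  have := hl.2.2; have := hl'.2.2; omega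

lemma b_one : b 1 = 1 := by
  rw [b_two_mul_add_one_eq_ncard 0, nonSquashingLE_zero, Set.ncard_singleton]

lemma b_two_mul_add_three (m : ℕ) : b (2 * m + 3) = b (2 * m + 2) + 1 := by
  rw [show 2 * m + 3 = 2 * (m + 1) + 1 by ring, b_two_mul_add_two_add_one_eq_ncard,
    ← b_two_mul_add_one_eq_ncard]

lemma b_two_mul_add_two_add_one (m : ℕ) : b (2 * m + 2) + 1 = b (2 * m + 1) + b (m + 1) := by
  rw [b_two_mul_add_two_add_one_eq_ncard, ncard_nonSquashingLE_succ, b_two_mul_add_one_eq_ncard]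

lemma b_two_mul_add_four (m : ℕ) : b (2 * m + 4) = b (2 * m + 2) + b (m + 2) := by
  have h₁ := b_two_mul_add_two_add_one (m + 1)
  have h₂ := b_two_mul_add_three m
  ring_nf at h₁ h₂ ⊢
  omega

lemma b_four_mul_add_two_mod_two (k : ℕ) : b (4 * k + 2) % 2 = (k + 1) % 2 := by
  induction k with
  | zero => have := b_two_mul_add_two_add_one 0; simp [b_one] at this ⊢; omega
  | succ k ih =>
    have h₁ := b_two_mul_add_four (2 * k + 1)
    have h₂ := b_two_mul_add_four (2 * k)
    have h₃ := b_two_mul_add_three k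
    ring_nf at h₁ h₂ h₃ ih ⊢
    omega

theorem stmt_9 (m : ℕ) : Even (b (16 * m + 4)) ∧ Odd (b (16 * m + 12)) := by
  have h₁ := b_two_mul_add_four (8 * m)
  have h₂ := b_two_mul_add_four (8 * m + 4)
  have h₃ := b_four_mul_add_two_mod_two (4 * m)
  have h₄ := b_four_mul_add_two_mod_two (2 * m)
  have h₅ := b_four_mul_add_two_mod_two (4 * m + 2)
  have h₆ := b_four_mul_add_two_mod_two (2 * m + 1)
  rw [Nat.even_iff, Nat.odd_iff]
  ring_nf at h₁ h₂ h₃ h₄ h₅ h₆ ⊢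
  omega
end

section
/- The numbers a(n,k) of non-squashing partitions of n into exactly k parts satisfy a(2m,k) = a(2m-1,k) + a(m,k-1) and a(2m+1,k) = a(2m,k) for all m ≥ 1, k ≥ 1, with initial conditions a(0,0) = 1, a(n,0) = 0 for n ≥ 1, a(n,k) = 0 for k > n, and a(n,1) = 1 for n ≥ 1. -/
/-- Number of non-squashing partitions of n into exactly k parts. -/
noncomputable def a (n k : ℕ) : ℕ :=
  {l : List ℕ | IsPartList l ∧ NSq 2 l ∧ l.sum = n ∧ l.length = k}.ncard


/-!
Write a partition with at least one part as `d ++ [x]`, `x` its largest part. It is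
non-squashing iff `d` is and `d.sum ≤ x`. Adding one to the last part is therefore, for `n ≥ 1`,
a bijection from the non-squashing partitions of `n` onto those of `n + 1` whose last part
exceeds the sum of the others. The partitions of `n + 1` it misses have last part equal to the
sum of the others, so they exist only when `n + 1 = 2 * m`, and they are then the lists
`d ++ [m]` with `d` a non-squashing partition of `m` into one part fewer.
-/

namespace NonSquashing

def parts (n k : ℕ) : Set (List ℕ) :=
  {l | IsPartList l ∧ NSq 2 l ∧ l.sum = n ∧ l.length = k}

theorem a_eq_ncard_parts (n k : ℕ) : a n k = (parts n k).ncard := rfl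

theorem parts_finite (n k : ℕ) : (parts n k).Finite := by
  refine ((List.finite_length_eq (Fin (n + 1)) k).image (List.map Fin.val)).subset ?_
  rintro l ⟨-, -, rfl, rfl⟩
  have hle : ∀ p ∈ l, p < l.sum + 1 := fun p hp => Nat.lt_succ_of_le (List.le_sum_of_mem hp)
  exact ⟨l.pmap (fun p hp => ⟨p, hp⟩) hle, by simp, by simp [List.map_pmap]⟩

theorem nsq_concat_iff (s : ℕ) (d : List ℕ) (x : ℕ) :
    NSq s (d ++ [x]) ↔ NSq s d ∧ (s - 1) * d.sum ≤ x := by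
  constructor
  · intro h
    refine ⟨fun j hj hjd => ?_, ?_⟩
    · simpa only [List.take_append_of_le_length hjd.le, List.getD_append _ _ _ _ hjd] using
        h j hj (by simp; omega)
    · rcases Nat.eq_zero_or_pos d.length with hd | hd
      · simp [List.length_eq_zero_iff.mp hd]
      · simpa [List.take_left'] using h d.length hd (by simp)
  · rintro ⟨hd, hx⟩ j hj hjlen
    rw [List.length_append, List.length_singleton] at hjlen
    rcases (Nat.lt_succ_iff.mp hjlen).lt_or_eq with hjd | rfl
    · rw [List.take_append_of_le_length hjd.le, List.getD_append _ _ _ _ hjd]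
      exact hd j hj hjd
    · simpa [List.take_left'] using hx

theorem isPartList_concat_iff (d : List ℕ) (x : ℕ) :
    IsPartList (d ++ [x]) ↔ IsPartList d ∧ (∀ p ∈ d, p ≤ x) ∧ 0 < x := by
  simp only [IsPartList, List.pairwise_append, List.mem_append, List.mem_singleton,
    List.pairwise_singleton, forall_eq, or_imp, forall_and, true_and]
  tauto

theorem concat_mem_parts_succ_iff {d : List ℕ} {x n k : ℕ} :
    d ++ [x] ∈ parts n (k + 1) ↔
      IsPartList d ∧ NSq 2 d ∧ d.length = k ∧ 0 < x ∧ d.sum ≤ x ∧ d.sum + x = n := by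
  have le_of_sum_le (h : d.sum ≤ x) : ∀ p ∈ d, p ≤ x :=
    fun p hp => (List.le_sum_of_mem hp).trans h
  simp only [parts, Set.mem_ofPred_eq, isPartList_concat_iff, nsq_concat_iff, List.sum_append,
    List.sum_singleton, List.length_append, List.length_singleton, Nat.add_right_cancel_iff,
    Nat.add_one_sub_one, one_mul]
  constructor
  · rintro ⟨⟨hd, -, hx⟩, ⟨hnsq, hsum⟩, rfl, rfl⟩
    exact ⟨hd, hnsq, rfl, hx, hsum, rfl⟩
  · rintro ⟨hd, hnsq, rfl, hx, hsum, rfl⟩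
    exact ⟨⟨hd, le_of_sum_le hsum, hx⟩, ⟨hnsq, hsum⟩, rfl, rfl⟩

theorem exists_eq_concat_of_mem_parts_succ {l : List ℕ} {n k : ℕ} (h : l ∈ parts n (k + 1)) :
    ∃ d x, l = d ++ [x] :=
  l.eq_nil_or_concat'.resolve_left fun hl => by simp [hl, parts] at h

theorem modifyLast_succ_injOn (n k : ℕ) :
    Set.InjOn (List.modifyLast (· + 1)) (parts n (k + 1)) := by
  intro l₁ h₁ l₂ h₂ heq
  obtain ⟨d₁, x₁, rfl⟩ := exists_eq_concat_of_mem_parts_succ h₁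
  obtain ⟨d₂, x₂, rfl⟩ := exists_eq_concat_of_mem_parts_succ h₂
  simpa [List.modifyLast_concat] using heq

theorem modifyLast_succ_image_parts {n : ℕ} (hn : 0 < n) (k : ℕ) :
    List.modifyLast (· + 1) '' parts n (k + 1) =
      parts (n + 1) (k + 1) ∩ {l | l.sum < 2 * l.getLastD 0} := by
  ext l
  constructor
  · rintro ⟨l, hl, rfl⟩
    obtain ⟨d, x, rfl⟩ := exists_eq_concat_of_mem_parts_succ hl
    obtain ⟨hd, hnsq, hlen, hx, hle, rfl⟩ := concat_mem_parts_succ_iff.mp hl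
    refine ⟨?_, ?_⟩
    · rw [List.modifyLast_concat, concat_mem_parts_succ_iff]
      exact ⟨hd, hnsq, hlen, x.succ_pos, by omega, rfl⟩
    · simp only [List.modifyLast_concat, Set.mem_ofPred_eq, List.sum_append, List.sum_singleton,
        List.getLastD_concat]
      omega
  · rintro ⟨hl, hlast⟩
    obtain ⟨d, y, rfl⟩ := exists_eq_concat_of_mem_parts_succ hl
    obtain ⟨hd, hnsq, hlen, hy, hle, hsum⟩ := concat_mem_parts_succ_iff.mp hl
    simp only [Set.mem_ofPred_eq, List.sum_append, List.sum_singleton, List.getLastD_concat]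
      at hlast
    refine ⟨d ++ [y - 1], concat_mem_parts_succ_iff.mpr
      ⟨hd, hnsq, hlen, by omega, by omega, by omega⟩, ?_⟩
    rw [List.modifyLast_concat, Nat.sub_add_cancel hy]

theorem a_succ_succ {n : ℕ} (hn : 0 < n) (k : ℕ) :
    a (n + 1) (k + 1) =
      a n (k + 1) + (parts (n + 1) (k + 1) \ {l | l.sum < 2 * l.getLastD 0}).ncard := by
  rw [a_eq_ncard_parts, a_eq_ncard_parts, ← (modifyLast_succ_injOn n k).ncard_image,
    modifyLast_succ_image_parts hn, Set.ncard_inter_add_ncard_sdiff_eq_ncard _ _ (parts_finite _ _)]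

theorem parts_two_mul_sdiff {m : ℕ} (hm : 0 < m) (k : ℕ) :
    parts (2 * m) (k + 1) \ {l | l.sum < 2 * l.getLastD 0} = (· ++ [m]) '' parts m k := by
  ext l
  constructor
  · rintro ⟨hl, hlast⟩
    obtain ⟨d, x, rfl⟩ := exists_eq_concat_of_mem_parts_succ hl
    obtain ⟨hd, hnsq, hlen, -, hle, hsum⟩ := concat_mem_parts_succ_iff.mp hl
    simp only [Set.mem_ofPred_eq, List.sum_append, List.sum_singleton, List.getLastD_concat]
      at hlast
    obtain rfl : x = m := by omega
    exact ⟨d, ⟨hd, hnsq, by omega, hlen⟩, rfl⟩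
  · rintro ⟨d, ⟨hd, hnsq, hsum, hlen⟩, rfl⟩
    refine ⟨concat_mem_parts_succ_iff.mpr ⟨hd, hnsq, hlen, hm, by omega, by omega⟩, ?_⟩
    simp [hsum, two_mul]

theorem parts_two_mul_add_one_sdiff (m k : ℕ) :
    parts (2 * m + 1) (k + 1) \ {l | l.sum < 2 * l.getLastD 0} = ∅ := by
  refine Set.eq_empty_of_forall_notMem ?_
  rintro l ⟨hl, hlast⟩
  obtain ⟨d, x, rfl⟩ := exists_eq_concat_of_mem_parts_succ hl
  obtain ⟨-, -, -, -, hle, hsum⟩ := concat_mem_parts_succ_iff.mp hl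
  simp only [Set.mem_ofPred_eq, List.sum_append, List.sum_singleton, List.getLastD_concat] at hlast
  omega

theorem a_two_mul {m : ℕ} (hm : 0 < m) (k : ℕ) :
    a (2 * m) (k + 1) = a (2 * m - 1) (k + 1) + a m k := by
  have h := a_succ_succ (n := 2 * m - 1) (by omega) k
  rwa [Nat.sub_add_cancel (by omega), parts_two_mul_sdiff hm,
    Set.ncard_image_of_injective _ (List.append_left_injective _)] at h

theorem a_two_mul_add_one {m : ℕ} (hm : 0 < m) (k : ℕ) :
    a (2 * m + 1) (k + 1) = a (2 * m) (k + 1) := by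
  rw [a_succ_succ (by omega), parts_two_mul_add_one_sdiff, Set.ncard_empty, add_zero]

theorem parts_zero_zero : parts 0 0 = {[]} := by
  ext l
  constructor
  · rintro ⟨-, -, -, hlen⟩
    exact List.length_eq_zero_iff.mp hlen
  · rintro rfl
    exact ⟨⟨List.Pairwise.nil, by simp⟩, by simp [NSq], rfl, rfl⟩

theorem parts_zero_eq_empty {n : ℕ} (hn : 0 < n) : parts n 0 = ∅ := by
  refine Set.eq_empty_of_forall_notMem ?_
  rintro l ⟨-, -, hsum, hlen⟩
  simp [List.length_eq_zero_iff.mp hlen] at hsum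
  omega

theorem parts_eq_empty_of_lt {n k : ℕ} (h : n < k) : parts n k = ∅ := by
  refine Set.eq_empty_of_forall_notMem ?_
  rintro l ⟨⟨-, hpos⟩, -, rfl, rfl⟩
  exact absurd (l.length_le_sum_of_one_le hpos) (by omega)

theorem parts_one {n : ℕ} (hn : 0 < n) : parts n 1 = {[n]} := by
  ext l
  constructor
  · intro hl
    obtain ⟨d, x, rfl⟩ := exists_eq_concat_of_mem_parts_succ hl
    obtain ⟨-, -, hlen, -, -, rfl⟩ := concat_mem_parts_succ_iff.mp hl
    simp [List.length_eq_zero_iff.mp hlen]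
  · rintro rfl
    exact concat_mem_parts_succ_iff (d := []).mpr
      ⟨⟨List.Pairwise.nil, by simp⟩, by simp [NSq], rfl, hn, by simp, by simp⟩

end NonSquashing

open NonSquashing in
theorem stmt_12 :
    (∀ m k, 1 ≤ m → 1 ≤ k → a (2 * m) k = a (2 * m - 1) k + a m (k - 1)) ∧
    (∀ m k, 1 ≤ m → 1 ≤ k → a (2 * m + 1) k = a (2 * m) k) ∧
    a 0 0 = 1 ∧
    (∀ n, 1 ≤ n → a n 0 = 0) ∧
    (∀ n k, n < k → a n k = 0) ∧
    (∀ n, 1 ≤ n → a n 1 = 1) := by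
  refine ⟨fun m k hm hk => ?_, fun m k hm hk => ?_, ?_, fun n hn => ?_, fun n k hnk => ?_,
    fun n hn => ?_⟩
  · obtain ⟨k, rfl⟩ := Nat.exists_eq_add_of_le' hk
    exact a_two_mul hm k
  · obtain ⟨k, rfl⟩ := Nat.exists_eq_add_of_le' hk
    exact a_two_mul_add_one hm k
  · rw [a_eq_ncard_parts, parts_zero_zero, Set.ncard_singleton]
  · rw [a_eq_ncard_parts, parts_zero_eq_empty hn, Set.ncard_empty]
  · rw [a_eq_ncard_parts, parts_eq_empty_of_lt hnk, Set.ncard_empty]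
  · rw [a_eq_ncard_parts, parts_one hn, Set.ncard_singleton]
end

section
/- The number of non-squashing partitions of n into exactly 3 parts equals ⌊n/4⌋·⌈n/4⌉ when n is even (the quarter-square of n/2); more precisely a(2m,3) = ⌊m/2⌋·⌈m/2⌉ for all m ≥ 0. -/
/-! A non-squashing partition `x ≤ y ≤ z` of `n` is determined by `(x, y)`, subject to
`0 < x ≤ y` and `x + y ≤ z = n - x - y`, i.e. `x + y ≤ ⌊n/2⌋`. Sorting these pairs by their sum `s`,
each `s` contributes `⌊s/2⌋` pairs, and `∑_{s ≤ k} ⌊s/2⌋ = ⌊k/2⌋⌈k/2⌉`. -/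

open Finset

lemma sum_range_succ_div_two (k : ℕ) :
    ∑ s ∈ range (k + 1), s / 2 = k / 2 * ((k + 1) / 2) := by
  induction k with
  | zero => rfl
  | succ k ih =>
    rw [sum_range_succ, ih, show (k + 1 + 1) / 2 = k / 2 + 1 by omega, Nat.mul_succ, Nat.mul_comm]

lemma card_filter_antidiagonal_pos_le (s : ℕ) :
    #{p ∈ antidiagonal s | 0 < p.1 ∧ p.1 ≤ p.2} = s / 2 := by
  calc _ = #(Icc 1 (s / 2)) := by
        refine card_nbij' Prod.fst (fun i => (i, s - i)) ?_ ?_ ?_ ?_ <;>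
          simp only [Set.MapsTo, Set.LeftInvOn, coe_filter, coe_Icc, Set.mem_ofPred_eq,
            Set.mem_Icc, HasAntidiagonal.mem_antidiagonal, Prod.forall, Prod.mk.injEq, true_and,
            implies_true] <;> intros <;> omega
    _ = s / 2 := by simp

def pairsWithSumLe (k : ℕ) : Finset (ℕ × ℕ) :=
  {p ∈ range (k + 1) ×ˢ range (k + 1) | 0 < p.1 ∧ p.1 ≤ p.2 ∧ p.1 + p.2 ≤ k}

lemma mem_pairsWithSumLe {k : ℕ} {p : ℕ × ℕ} :
    p ∈ pairsWithSumLe k ↔ 0 < p.1 ∧ p.1 ≤ p.2 ∧ p.1 + p.2 ≤ k := by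
  simp only [pairsWithSumLe, mem_filter, mem_product, mem_range]
  omega

lemma card_pairsWithSumLe (k : ℕ) : #(pairsWithSumLe k) = k / 2 * ((k + 1) / 2) := by
  have hmaps : Set.MapsTo (fun p : ℕ × ℕ => p.1 + p.2) (pairsWithSumLe k) (range (k + 1)) :=
    fun p hp => mem_range.mpr (Nat.lt_succ_of_le (mem_pairsWithSumLe.mp hp).2.2)
  have hfibre (s : ℕ) (hs : s ∈ range (k + 1)) :
      {p ∈ pairsWithSumLe k | p.1 + p.2 = s} = {p ∈ antidiagonal s | 0 < p.1 ∧ p.1 ≤ p.2} := by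
    ext p
    simp only [mem_filter, mem_pairsWithSumLe, HasAntidiagonal.mem_antidiagonal,
      mem_range] at hs ⊢
    omega
  rw [card_eq_sum_card_fiberwise hmaps, sum_congr rfl fun s hs => by
    rw [hfibre s hs, card_filter_antidiagonal_pos_le], sum_range_succ_div_two]

lemma isPartList_triple_iff {x y z : ℕ} : IsPartList [x, y, z] ↔ 0 < x ∧ x ≤ y ∧ y ≤ z := by
  simp only [IsPartList, List.pairwise_cons, List.mem_cons, List.not_mem_nil, or_false,
    forall_eq_or_imp, forall_eq, IsEmpty.forall_iff, implies_true, List.Pairwise.nil, and_self,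
    and_true]
  omega

lemma nsq_triple_iff {s x y z : ℕ} :
    NSq s [x, y, z] ↔ (s - 1) * x ≤ y ∧ (s - 1) * (x + y) ≤ z := by
  constructor
  · intro h
    exact ⟨by simpa using h 1 one_pos (by simp), by simpa using h 2 two_pos (by simp)⟩
  · rintro ⟨h1, h2⟩ j hj hj3
    simp only [List.length_cons, List.length_nil] at hj3
    interval_cases j <;> simpa

lemma a_three_eq_card_pairsWithSumLe (n : ℕ) : a n 3 = #(pairsWithSumLe (n / 2)) := by
  have hset : {l : List ℕ | IsPartList l ∧ NSq 2 l ∧ l.sum = n ∧ l.length = 3}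
      = (pairsWithSumLe (n / 2)).image fun p => [p.1, p.2, n - p.1 - p.2] := by
    ext l
    simp only [Set.mem_ofPred_eq, coe_image, Set.mem_image, mem_coe, mem_pairsWithSumLe,
      List.length_eq_three]
    constructor
    · rintro ⟨hpart, hnsq, hsum, x, y, z, rfl⟩
      rw [isPartList_triple_iff] at hpart
      rw [nsq_triple_iff] at hnsq
      simp only [List.sum_cons, List.sum_nil] at hsum
      exact ⟨(x, y), by omega, by simp only [List.cons.injEq, and_true, true_and]; omega⟩
    · rintro ⟨⟨x, y⟩, hxy, rfl⟩
      dsimp only at hxy ⊢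
      refine ⟨isPartList_triple_iff.mpr (by omega), nsq_triple_iff.mpr (by omega), ?_,
        _, _, _, rfl⟩
      simp only [List.sum_cons, List.sum_nil]
      omega
  rw [a, hset, Set.ncard_coe_finset, card_image_of_injective]
  intro p q h
  simp only [List.cons.injEq] at h
  exact Prod.ext h.1 h.2.1

theorem stmt_15 (m : ℕ) : a (2 * m) 3 = (m / 2) * ((m + 1) / 2) := by
  rw [a_three_eq_card_pairsWithSumLe, Nat.mul_div_cancel_left m two_pos, card_pairsWithSumLe]
end

section
/- If c(n,m) denotes the number of non-squashing partitions of n into distinct parts whose greatest part is m, then c(n,m) = 0 whenever m < n/2 or n < m; and for m ≤ n ≤ 2m, c(n,m) = b(n-m) if n < 2m and c(n,m) = b(n-m) - 1 if n = 2m, where b is the number of non-squashing partitions into distinct parts. -/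
/-- Number of non-squashing partitions of n into distinct parts with greatest part m. -/
noncomputable def c (n m : ℕ) : ℕ :=
  {l : List ℕ | DistinctPartList l ∧ NSq 2 l ∧ l.sum = n ∧ m ∈ l ∧ ∀ p ∈ l, p ≤ m}.ncard

theorem List.exists_eq_append_singleton_of_pairwise_lt {α : Type*} [PartialOrder α]
    {l : List α} {m : α} (hl : l.Pairwise (· < ·)) (hm : m ∈ l) (hmax : ∀ p ∈ l, p ≤ m) :
    ∃ l', l = l' ++ [m] ∧ ∀ p ∈ l', p < m := by
  have hne : l ≠ [] := List.ne_nil_of_mem hm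
  have hdecomp := List.dropLast_append_getLast hne
  have hlt : ∀ p ∈ l.dropLast, p < l.getLast hne := by
    rw [← hdecomp] at hl
    exact fun p hp ↦ (List.pairwise_append.1 hl).2.2 p hp _ (List.mem_singleton_self _)
  have hlast : l.getLast hne = m := by
    refine le_antisymm (hmax _ (List.getLast_mem hne)) ?_
    rw [← hdecomp] at hm
    rcases List.mem_append.1 hm with h | h
    · exact (hlt m h).le
    · exact (List.mem_singleton.1 h).le
  exact ⟨l.dropLast, by rw [← hlast, hdecomp], fun p hp ↦ hlast ▸ hlt p hp⟩

theorem List.eq_singleton_of_mem_of_sum_le {l : List ℕ} {p : ℕ} (hpos : ∀ q ∈ l, 0 < q)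
    (hp : p ∈ l) (hsum : l.sum ≤ p) : l = [p] := by
  have hzero : (l.erase p).sum = 0 := by
    have := List.sum_erase hp
    omega
  have hnil : l.erase p = [] := List.eq_nil_iff_forall_not_mem.2 fun q hq ↦
    (hpos q (List.mem_of_mem_erase hq)).ne' (List.sum_eq_zero_iff.1 hzero q hq)
  simpa [hnil] using List.perm_cons_erase hp

theorem DistinctPartList.append_singleton_iff {l : List ℕ} {m : ℕ} :
    DistinctPartList (l ++ [m]) ↔ DistinctPartList l ∧ (∀ p ∈ l, p < m) ∧ 0 < m := by
  simp only [DistinctPartList, List.pairwise_append, List.pairwise_singleton, List.mem_append,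
    List.mem_singleton, true_and, forall_eq, or_imp, forall_and]
  tauto

theorem NSq.append_singleton_iff {s m : ℕ} {l : List ℕ} :
    NSq s (l ++ [m]) ↔ NSq s l ∧ (s - 1) * l.sum ≤ m := by
  constructor
  · intro h
    refine ⟨fun j hj hjl ↦ ?_, ?_⟩
    · have := h j hj (by rw [List.length_append, List.length_singleton]; omega)
      rwa [List.take_append_of_le_length hjl.le, List.getD_append _ _ _ _ hjl] at this
    · rcases eq_or_ne l [] with rfl | hne
      · simp
      · have := h l.length (List.length_pos_iff.2 hne) (by simp)
        rw [List.take_left, List.getD_append_right _ _ _ _ le_rfl, Nat.sub_self] at this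
        simpa using this
  · rintro ⟨hl, hsum⟩ j hj hjl
    rcases lt_or_ge j l.length with hlt | hge
    · rw [List.take_append_of_le_length hlt.le, List.getD_append _ _ _ _ hlt]
      exact hl j hj hlt
    · obtain rfl : j = l.length := by
        rw [List.length_append, List.length_singleton] at hjl; omega
      rw [List.take_left, List.getD_append_right _ _ _ _ le_rfl, Nat.sub_self]
      simpa using hsum

theorem c_eq_zero_of_lt {n m : ℕ} (h : n < m) : c n m = 0 := by
  rw [c]
  convert Set.ncard_empty (List ℕ) using 2
  refine Set.eq_empty_of_forall_notMem ?_
  rintro l ⟨-, -, hsum, hm, -⟩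
  have := List.le_sum_of_mem hm
  omega

theorem c_eq_zero_of_two_mul_lt {n m : ℕ} (h : 2 * m < n) : c n m = 0 := by
  rw [c]
  convert Set.ncard_empty (List ℕ) using 2
  refine Set.eq_empty_of_forall_notMem ?_
  rintro l ⟨⟨hl, -⟩, hnsq, hsum, hm, hmax⟩
  obtain ⟨l', rfl, -⟩ := List.exists_eq_append_singleton_of_pairwise_lt hl hm hmax
  have := (NSq.append_singleton_iff.1 hnsq).2
  simp only [List.sum_append, List.sum_singleton] at hsum
  omega

theorem c_set_eq_image {n m : ℕ} (hm : 1 ≤ m) (h1 : m ≤ n) (h2 : n ≤ 2 * m) :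
    {l : List ℕ | DistinctPartList l ∧ NSq 2 l ∧ l.sum = n ∧ m ∈ l ∧ ∀ p ∈ l, p ≤ m}
      = (· ++ [m]) '' ({l : List ℕ | DistinctPartList l ∧ NSq 2 l ∧ l.sum = n - m} \ {[m]}) := by
  ext l
  constructor
  · rintro ⟨hdist, hnsq, hsum, hm, hmax⟩
    obtain ⟨l', rfl, hlt⟩ := List.exists_eq_append_singleton_of_pairwise_lt hdist.1 hm hmax
    simp only [List.sum_append, List.sum_singleton] at hsum
    refine ⟨l', ⟨⟨(DistinctPartList.append_singleton_iff.1 hdist).1,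
      (NSq.append_singleton_iff.1 hnsq).1, by omega⟩, ?_⟩, rfl⟩
    rintro rfl
    exact lt_irrefl m (hlt m (List.mem_singleton_self m))
  · rintro ⟨l', ⟨⟨hdist, hnsq, hsum⟩, hne⟩, rfl⟩
    have hlt : ∀ p ∈ l', p < m := fun p hp ↦ by
      have hle : p ≤ m := (List.le_sum_of_mem hp).trans (by omega)
      refine hle.lt_of_ne fun hpm ↦ hne ?_
      subst hpm
      exact List.eq_singleton_of_mem_of_sum_le hdist.2 hp (by omega)
    refine ⟨DistinctPartList.append_singleton_iff.2 ⟨hdist, hlt, hm⟩,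
      NSq.append_singleton_iff.2 ⟨hnsq, by omega⟩,
      by rw [List.sum_append, List.sum_singleton]; omega, by simp, ?_⟩
    simp only [List.mem_append, List.mem_singleton]
    rintro p (hp | rfl)
    exacts [(hlt p hp).le, le_rfl]

theorem c_eq_ncard_sdiff {n m : ℕ} (hm : 1 ≤ m) (h1 : m ≤ n) (h2 : n ≤ 2 * m) :
    c n m = ({l : List ℕ | DistinctPartList l ∧ NSq 2 l ∧ l.sum = n - m} \ {[m]}).ncard := by
  rw [c, c_set_eq_image hm h1 h2, Set.ncard_image_of_injective _ (List.append_left_injective [m])]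

theorem stmt_17 (n m : ℕ) (hm : 1 ≤ m) :
    (2 * m < n → c n m = 0) ∧
    (n < m → c n m = 0) ∧
    (m ≤ n → n < 2 * m → c n m = b (n - m)) ∧
    (n = 2 * m → c n m = b m - 1) := by
  refine ⟨c_eq_zero_of_two_mul_lt, c_eq_zero_of_lt, fun h1 h2 ↦ ?_, ?_⟩
  · rw [c_eq_ncard_sdiff hm h1 h2.le, Set.sdiff_singleton_eq_self, b]
    rintro ⟨-, -, hsum⟩
    rw [List.sum_singleton] at hsum
    omega
  · rintro rfl
    have hsingleton : [m] ∈ {l : List ℕ | DistinctPartList l ∧ NSq 2 l ∧ l.sum = m} :=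
      ⟨⟨List.pairwise_singleton _ m, List.forall_mem_singleton.2 hm⟩,
        fun j hj hjl ↦ by rw [List.length_singleton] at hjl; omega, List.sum_singleton⟩
    rw [c_eq_ncard_sdiff hm (by omega) le_rfl, Nat.two_mul, Nat.add_sub_cancel,
      Set.ncard_sdiff_singleton_of_mem hsingleton, b]
end
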